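/- Every vector in the linear span V of {φ₁, φ₂, φ₃, φ₄} in ℂ² ⊗ ℂ² ⊗ ℂ² that is a product vector (i.e., of the form u ⊗ v ⊗ w with u, v, w ∈ ℂ²) is a scalar multiple of one of φ₁, φ₂, φ₃, φ₄; equivalently, every nonzero vector of V other than the scalar multiples of the φ_j is entangled. In fact, every vector of V that factorizes as u ⊗ η with u ∈ ℂ² and η ∈ ℂ² ⊗ ℂ² (the bipartite cut {1} versus {2,3}) is a scalar multiple of some φ_j. -/

import Mathlib

noncomputable section

abbrev Q : Type := EuclideanSpace ℂ (Fin 2)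
abbrev Q2 : Type := EuclideanSpace ℂ (Fin 2 × Fin 2)
abbrev Q3 : Type := EuclideanSpace ℂ (Fin 2 × Fin 2 × Fin 2)

/-- standard basis vector of ℂ² -/
def ket2 (i : Fin 2) : Q := EuclideanSpace.single i 1

/-- the state |+⟩ -/
def plus : Q := (Real.sqrt 2 : ℂ)⁻¹ • (ket2 0 + ket2 1)

/-- the state |−⟩ -/
def minus : Q := (Real.sqrt 2 : ℂ)⁻¹ • (ket2 0 - ket2 1)

/-- elementary tensor of three qubit vectors, in ℂ² ⊗ ℂ² ⊗ ℂ² ≅ ℂ⁸ -/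
def tp3 (u v w : Q) : Q3 := WithLp.toLp 2 (fun p : Fin 2 × Fin 2 × Fin 2 => u p.1 * v p.2.1 * w p.2.2)

/-- a product vector in ℂ² ⊗ ℂ² ⊗ ℂ² -/
def IsProd3 (ξ : Q3) : Prop := ∃ u v w : Q, ξ = tp3 u v w

/-- the set of one-dimensional subspaces of `T` spanned by (nonzero) product vectors -/
def prodLines3 (T : Submodule ℂ Q3) : Set (Submodule ℂ Q3) :=
  {L | ∃ ξ : Q3, ξ ≠ 0 ∧ ξ ∈ T ∧ IsProd3 ξ ∧ L = Submodule.span ℂ {ξ}}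

/-- a factorized vector across the bipartite cut {1} | {2,3} -/
def cut1 (u : Q) (η : Q2) : Q3 := WithLp.toLp 2 (fun p : Fin 2 × Fin 2 × Fin 2 => u p.1 * η p.2)

/-- a factorized vector across the bipartite cut {2} | {1,3} -/
def cut2 (u : Q) (η : Q2) : Q3 := WithLp.toLp 2 (fun p : Fin 2 × Fin 2 × Fin 2 => u p.2.1 * η (p.1, p.2.2))

/-- a factorized vector across the bipartite cut {3} | {1,2} -/
def cut3 (u : Q) (η : Q2) : Q3 := WithLp.toLp 2 (fun p : Fin 2 × Fin 2 × Fin 2 => u p.2.2 * η (p.1, p.2.1))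

def φ₁ : Q3 := tp3 (ket2 0) (ket2 1) plus
def φ₂ : Q3 := tp3 (ket2 1) plus (ket2 0)
def φ₃ : Q3 := tp3 plus (ket2 0) (ket2 1)
def φ₄ : Q3 := tp3 minus minus minus

/-- the span of the three-qubit UPB of Bennett et al. -/
def V3 : Submodule ℂ Q3 := Submodule.span ℂ {φ₁, φ₂, φ₃, φ₄}

/-- the orthogonal complement of the span of the three-qubit UPB -/
def SV : Submodule ℂ Q3 := V3ᗮ

/-! Write ψ ∈ V as `k₁ φ₁ + k₂ φ₂ + k₃ φ₃ + k₄ φ₄`. A factorization `ψ = u ⊗ η` across the cut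
{1} | {2,3} says that the 2 × 4 matrix `ψ (x, (y, z))` has rank at most one. Its 2 × 2 minors are
quadratic forms in the `kᵢ`, and their vanishing forces `kᵢ kⱼ = 0` for `i ≠ j`, so at most one
coefficient is nonzero. A product vector `u ⊗ v ⊗ w` factorizes across that cut. -/

lemma ket2_apply (i j : Fin 2) : ket2 i j = if j = i then 1 else 0 :=
  PiLp.single_apply _ _ _ _ _

lemma plus_apply (j : Fin 2) : plus j = ((√2 : ℝ) : ℂ)⁻¹ := by
  fin_cases j <;> simp [plus, ket2]

lemma minus_apply (j : Fin 2) :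
    minus j = if j = 0 then ((√2 : ℝ) : ℂ)⁻¹ else -((√2 : ℝ) : ℂ)⁻¹ := by
  fin_cases j <;> simp [minus, ket2]

lemma cut1_apply_mul_apply_comm (u : Q) (η : Q2) (p q : Fin 2 × Fin 2) :
    cut1 u η (0, p) * cut1 u η (1, q) = cut1 u η (1, p) * cut1 u η (0, q) := by
  simp only [cut1]; ring

lemma tp3_eq_cut1 (u v w : Q) :
    tp3 u v w = cut1 u (WithLp.toLp 2 fun p : Fin 2 × Fin 2 => v p.1 * w p.2) := by
  ext p; simp only [tp3, cut1]; ring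

lemma mem_V3_iff {ψ : Q3} :
    ψ ∈ V3 ↔ ∃ k₁ k₂ k₃ k₄ : ℂ, ψ = k₁ • φ₁ + k₂ • φ₂ + k₃ • φ₃ + k₄ • φ₄ := by
  simp only [V3, Submodule.mem_span_insert, Submodule.mem_span_singleton]
  constructor
  · rintro ⟨k₁, _, ⟨k₂, _, ⟨k₃, _, ⟨k₄, rfl⟩, rfl⟩, rfl⟩, rfl⟩
    exact ⟨k₁, k₂, k₃, k₄, by abel⟩
  · rintro ⟨k₁, k₂, k₃, k₄, rfl⟩
    exact ⟨k₁, _, ⟨k₂, _, ⟨k₃, _, ⟨k₄, rfl⟩, rfl⟩, rfl⟩, by abel⟩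

/-- With `s = 1/√2` and `(a, b, c, d) = (k₁ s, k₂ s, k₃ s, k₄ s³)`, the matrix of `∑ kᵢ φᵢ` across the
cut {1} | {2,3} has rows `(d, c - d, a - d, a + d)` and `(b - d, c + d, b + d, -d)`; the hypotheses are
its six 2 × 2 minors. -/
lemma mul_eq_zero_of_minors {K : Type*} [Field K] [CharZero K] {a b c d : K}
    (h01 : d * (c + d) = (b - d) * (c - d)) (h02 : d * (b + d) = (b - d) * (a - d))
    (h03 : d * -d = (b - d) * (a + d)) (h12 : (c - d) * (b + d) = (c + d) * (a - d))
    (h13 : (c - d) * -d = (c + d) * (a + d)) (h23 : (a - d) * -d = (b + d) * (a + d)) :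
    a * b = 0 ∧ a * c = 0 ∧ a * d = 0 ∧ b * c = 0 ∧ b * d = 0 ∧ c * d = 0 := by
  have had : a * d = 0 := by linear_combination (1/3 : K) * h03 - (1/3 : K) * h23
  have hbd : b * d = 0 := by linear_combination (1/3 : K) * h02 - (1/3 : K) * h03
  have hcd : c * d = 0 := by
    linear_combination (1/6 : K) * h01 + (1/6 : K) * h12 - (1/6 : K) * h13
  refine ⟨?_, ?_, had, ?_, hbd, hcd⟩
  · linear_combination -h03 + had - hbd
  · linear_combination -h13 - 2 * hcd - had
  · linear_combination -h01 + 2 * hcd + hbd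

lemma eq_zero_or_eq_zero_of_combination_eq_cut1 {k₁ k₂ k₃ k₄ : ℂ} {u : Q} {η : Q2}
    (h : k₁ • φ₁ + k₂ • φ₂ + k₃ • φ₃ + k₄ • φ₄ = cut1 u η) :
    (k₁ = 0 ∨ k₂ = 0) ∧ (k₁ = 0 ∨ k₃ = 0) ∧ (k₁ = 0 ∨ k₄ = 0) ∧
      (k₂ = 0 ∨ k₃ = 0) ∧ (k₂ = 0 ∨ k₄ = 0) ∧ (k₃ = 0 ∨ k₄ = 0) := by
  set ψ := k₁ • φ₁ + k₂ • φ₂ + k₃ • φ₃ + k₄ • φ₄ with hψ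
  obtain ⟨s, hs⟩ : ∃ s : ℂ, ((√2 : ℝ) : ℂ)⁻¹ = s := ⟨_, rfl⟩
  have hs0 : s ≠ 0 := by simp [← hs]
  have hminor (p q : Fin 2 × Fin 2) : ψ (0, p) * ψ (1, q) = ψ (1, p) * ψ (0, q) :=
    h ▸ cut1_apply_mul_apply_comm u η p q
  obtain ⟨h000, h001, h010, h011, h100, h101, h110, h111⟩ :
      ψ (0, 0, 0) = k₄ * s ^ 3 ∧ ψ (0, 0, 1) = k₃ * s - k₄ * s ^ 3 ∧
      ψ (0, 1, 0) = k₁ * s - k₄ * s ^ 3 ∧ ψ (0, 1, 1) = k₁ * s + k₄ * s ^ 3 ∧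
      ψ (1, 0, 0) = k₂ * s - k₄ * s ^ 3 ∧ ψ (1, 0, 1) = k₃ * s + k₄ * s ^ 3 ∧
      ψ (1, 1, 0) = k₂ * s + k₄ * s ^ 3 ∧ ψ (1, 1, 1) = -(k₄ * s ^ 3) := by
    simp only [hψ, φ₁, φ₂, φ₃, φ₄, tp3, PiLp.add_apply, PiLp.smul_apply, smul_eq_mul, ket2_apply,
      plus_apply, minus_apply, hs, Fin.isValue, ↓reduceIte, Fin.reduceEq]
    refine ⟨?_, ?_, ?_, ?_, ?_, ?_, ?_, ?_⟩ <;> ring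
  have hprod := mul_eq_zero_of_minors (a := k₁ * s) (b := k₂ * s) (c := k₃ * s) (d := k₄ * s ^ 3)
    (by simpa only [h000, h001, h100, h101] using hminor (0, 0) (0, 1))
    (by simpa only [h000, h010, h100, h110] using hminor (0, 0) (1, 0))
    (by simpa only [h000, h011, h100, h111] using hminor (0, 0) (1, 1))
    (by simpa only [h001, h010, h101, h110] using hminor (0, 1) (1, 0))
    (by simpa only [h001, h011, h101, h111] using hminor (0, 1) (1, 1))
    (by simpa only [h010, h011, h110, h111] using hminor (1, 0) (1, 1))
  simpa [hs0] using hprod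

lemma exists_eq_smul_of_eq_zero_or_eq_zero {R M : Type*} [Semiring R] [AddCommMonoid M]
    [Module R M] {k₁ k₂ k₃ k₄ : R} (x₁ x₂ x₃ x₄ : M)
    (h : (k₁ = 0 ∨ k₂ = 0) ∧ (k₁ = 0 ∨ k₃ = 0) ∧ (k₁ = 0 ∨ k₄ = 0) ∧
      (k₂ = 0 ∨ k₃ = 0) ∧ (k₂ = 0 ∨ k₄ = 0) ∧ (k₃ = 0 ∨ k₄ = 0)) :
    ∃ c : R, k₁ • x₁ + k₂ • x₂ + k₃ • x₃ + k₄ • x₄ = c • x₁ ∨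
      k₁ • x₁ + k₂ • x₂ + k₃ • x₃ + k₄ • x₄ = c • x₂ ∨
      k₁ • x₁ + k₂ • x₂ + k₃ • x₃ + k₄ • x₄ = c • x₃ ∨
      k₁ • x₁ + k₂ • x₂ + k₃ • x₃ + k₄ • x₄ = c • x₄ := by
  obtain ⟨h₁₂, h₁₃, h₁₄, h₂₃, h₂₄, h₃₄⟩ := h
  by_cases hk₁ : k₁ = 0
  · by_cases hk₂ : k₂ = 0
    · by_cases hk₃ : k₃ = 0
      · exact ⟨k₄, Or.inr <| Or.inr <| Or.inr <| by simp [hk₁, hk₂, hk₃]⟩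
      · exact ⟨k₃, Or.inr <| Or.inr <| Or.inl <| by simp [hk₁, hk₂, h₃₄.resolve_left hk₃]⟩
    · exact ⟨k₂, Or.inr <| Or.inl <| by
        simp [hk₁, h₂₃.resolve_left hk₂, h₂₄.resolve_left hk₂]⟩
  · exact ⟨k₁, Or.inl <| by
      simp [h₁₂.resolve_left hk₁, h₁₃.resolve_left hk₁, h₁₄.resolve_left hk₁]⟩

theorem exists_eq_smul_φ_of_mem_V3_of_eq_cut1 {ψ : Q3} (hψ : ψ ∈ V3) (u : Q) (η : Q2)
    (hcut : ψ = cut1 u η) :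
    ∃ c : ℂ, ψ = c • φ₁ ∨ ψ = c • φ₂ ∨ ψ = c • φ₃ ∨ ψ = c • φ₄ := by
  obtain ⟨k₁, k₂, k₃, k₄, rfl⟩ := mem_V3_iff.mp hψ
  exact exists_eq_smul_of_eq_zero_or_eq_zero φ₁ φ₂ φ₃ φ₄
    (eq_zero_or_eq_zero_of_combination_eq_cut1 hcut)

theorem statement4 :
    (∀ ψ ∈ V3, (∃ (u : Q) (η : Q2), ψ = cut1 u η) →
      ∃ c : ℂ, ψ = c • φ₁ ∨ ψ = c • φ₂ ∨ ψ = c • φ₃ ∨ ψ = c • φ₄) ∧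
    (∀ ψ ∈ V3, IsProd3 ψ →
      ∃ c : ℂ, ψ = c • φ₁ ∨ ψ = c • φ₂ ∨ ψ = c • φ₃ ∨ ψ = c • φ₄) := by
  refine ⟨fun ψ hψ ⟨u, η, hcut⟩ => exists_eq_smul_φ_of_mem_V3_of_eq_cut1 hψ u η hcut, ?_⟩
  rintro ψ hψ ⟨u, v, w, rfl⟩
  exact exists_eq_smul_φ_of_mem_V3_of_eq_cut1 hψ u _ (tp3_eq_cut1 u v w)
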